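/- Let n ≥ 1, 0 < β < 1, 0 < α < n with α + β < n. Suppose b : ℝⁿ → ℝ satisfies b(x) ≥ 0 for all x and |b(x) − b(y)| ≤ C |x − y|^β for all x, y ∈ ℝⁿ. Then there is a constant K depending only on n and β such that for every locally integrable f and every x ∈ ℝⁿ with M_α f(x) < ∞ and M_{α+β} f(x) < ∞, one has | b(x) M_α f(x) − M_α(b f)(x) | ≤ K C · M_{α+β} f(x). -/

import Mathlib

open MeasureTheory Metric Set
open scoped ENNReal NNReal

/-- The fractional maximal function `M_α f` on `ℝⁿ`:
`M_α f (x) = sup_{B ∋ x} |B|^{α/n - 1} ∫_B |f|`. -/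
noncomputable def fracMax (n : ℕ) (α : ℝ) (f : EuclideanSpace ℝ (Fin n) → ℝ)
    (x : EuclideanSpace ℝ (Fin n)) : ℝ≥0∞ :=
  ⨆ (c : EuclideanSpace ℝ (Fin n)) (r : ℝ) (_ : 0 < r) (_ : x ∈ ball c r),
    volume (ball c r) ^ (α / n - 1) * ∫⁻ y in ball c r, (‖f y‖₊ : ℝ≥0∞)

/-- The fractional maximal commutator `M_{α,b} f`:
`M_{α,b} f (x) = sup_{B ∋ x} |B|^{α/n - 1} ∫_B |b(x) - b(y)| |f(y)| dy`. -/
noncomputable def fracMaxComm (n : ℕ) (α : ℝ) (b f : EuclideanSpace ℝ (Fin n) → ℝ)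
    (x : EuclideanSpace ℝ (Fin n)) : ℝ≥0∞ :=
  ⨆ (c : EuclideanSpace ℝ (Fin n)) (r : ℝ) (_ : 0 < r) (_ : x ∈ ball c r),
    volume (ball c r) ^ (α / n - 1) *
      ∫⁻ y in ball c r, (‖b x - b y‖₊ : ℝ≥0∞) * (‖f y‖₊ : ℝ≥0∞)

/-- The local fractional maximal function `M_{α,B₀} f`, supremum over balls `B` with
`x ∈ B ⊆ B₀`. For `α = 0` this is the local Hardy–Littlewood maximal function `M_{B₀}`. -/
noncomputable def fracMaxLocal (n : ℕ) (α : ℝ) (B₀ : Set (EuclideanSpace ℝ (Fin n)))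
    (f : EuclideanSpace ℝ (Fin n) → ℝ) (x : EuclideanSpace ℝ (Fin n)) : ℝ≥0∞ :=
  ⨆ (c : EuclideanSpace ℝ (Fin n)) (r : ℝ) (_ : 0 < r) (_ : x ∈ ball c r)
    (_ : ball c r ⊆ B₀),
    volume (ball c r) ^ (α / n - 1) * ∫⁻ y in ball c r, (‖f y‖₊ : ℝ≥0∞)

/-- The average `b_B = |B|⁻¹ ∫_B b` of `b` over the ball `B = ball c r`. -/
noncomputable def ballAvg (n : ℕ) (b : EuclideanSpace ℝ (Fin n) → ℝ)
    (c : EuclideanSpace ℝ (Fin n)) (r : ℝ) : ℝ :=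
  (volume (ball c r)).toReal⁻¹ * ∫ y in ball c r, b y

/-!
Ball by ball, `b x · |B|^{α/n-1} ∫_B |f|` and `|B|^{α/n-1} ∫_B |b f|` differ by at most
`|B|^{α/n-1} ∫_B |b x - b y| |f y| dy`, because `b x = |b x|` (here `b ≥ 0` enters) and
`||b x| - |b y|| ≤ |b x - b y|`. Taking suprema, `|b M_α f - M_α (b f)| ≤ M_{α,b} f` at every
point where the maximal functions are finite. On a ball of radius `r` containing `x`, the
Hölder bound gives `|b x - b y| ≤ C (2r)^β`, and `r^β = |B(0,1)|^{-β/n} |B|^{β/n}` upgrades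
`|B|^{α/n-1}` to `|B|^{(α+β)/n-1}`; hence `M_{α,b} f ≤ 2^β |B(0,1)|^{-β/n} C M_{α+β} f`.
-/

open Filter Topology

lemma ENNReal.abs_toReal_sub_toReal_le {a b d : ℝ≥0∞} (ha : a ≠ ∞) (hd : d ≠ ∞)
    (hab : a ≤ b + d) (hba : b ≤ a + d) : |a.toReal - b.toReal| ≤ d.toReal := by
  have hb : b ≠ ∞ := ne_top_of_le_ne_top (add_ne_top.2 ⟨ha, hd⟩) hba
  have h₁ := toReal_mono (add_ne_top.2 ⟨hb, hd⟩) hab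
  have h₂ := toReal_mono (add_ne_top.2 ⟨ha, hd⟩) hba
  rw [toReal_add hb hd] at h₁
  rw [toReal_add ha hd] at h₂
  exact abs_sub_le_iff.2 ⟨by linarith, by linarith⟩

section Holder

variable {E : Type*} [NormedAddCommGroup E] {b : E → ℝ} {C β : ℝ}

lemma nonneg_of_abs_sub_le_mul_norm_rpow [Nontrivial E]
    (hb : ∀ x y, |b x - b y| ≤ C * ‖x - y‖ ^ β) : 0 ≤ C := by
  obtain ⟨z, hz⟩ := exists_ne (0 : E)
  have hpos : 0 < ‖z‖ ^ β := Real.rpow_pos_of_pos (norm_pos_iff.2 hz) β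
  have h := hb z 0
  rw [sub_zero] at h
  nlinarith [abs_nonneg (b z - b 0)]

lemma continuous_of_abs_sub_le_mul_norm_rpow (hβ : 0 < β)
    (hb : ∀ x y, |b x - b y| ≤ C * ‖x - y‖ ^ β) : Continuous b := by
  refine continuous_iff_continuousAt.2 fun x => tendsto_iff_norm_sub_tendsto_zero.2 ?_
  have h : Tendsto (fun y => C * ‖y - x‖ ^ β) (𝓝 x) (𝓝 0) := by
    have : Continuous fun y => C * ‖y - x‖ ^ β :=
      continuous_const.mul ((continuous_id.sub continuous_const).norm.rpow_const
        fun _ => Or.inr hβ.le)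
    simpa [Real.zero_rpow hβ.ne'] using this.tendsto x
  exact squeeze_zero (fun _ => norm_nonneg _) (fun y => hb y x) h

end Holder

lemma Measurable.aemeasurable_enorm_sub_mul {X : Type*} [MeasurableSpace X] {μ : Measure X}
    {b f : X → ℝ} (hb : Measurable b) (x : X) (hf : AEMeasurable f μ) :
    AEMeasurable (fun y => (‖b x - b y‖₊ : ℝ≥0∞) * (‖f y‖₊ : ℝ≥0∞)) μ :=
  (measurable_const.sub hb).enorm.aemeasurable.mul hf.enorm

section FracMax

variable {n : ℕ} {α β C r : ℝ} {b f : EuclideanSpace ℝ (Fin n) → ℝ}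
  {x c : EuclideanSpace ℝ (Fin n)}

lemma le_fracMax (hr : 0 < r) (hx : x ∈ ball c r) :
    volume (ball c r) ^ (α / n - 1) * ∫⁻ y in ball c r, (‖f y‖₊ : ℝ≥0∞) ≤ fracMax n α f x :=
  le_iSup₂_of_le c r <| le_iSup₂_of_le hr hx le_rfl

lemma le_fracMaxComm (hr : 0 < r) (hx : x ∈ ball c r) :
    volume (ball c r) ^ (α / n - 1) *
        ∫⁻ y in ball c r, (‖b x - b y‖₊ : ℝ≥0∞) * (‖f y‖₊ : ℝ≥0∞) ≤
      fracMaxComm n α b f x :=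
  le_iSup₂_of_le c r <| le_iSup₂_of_le hr hx le_rfl

lemma enorm_mul_fracMax_le (hb : Measurable b) (hf : AEMeasurable f) :
    ‖b x‖ₑ * fracMax n α f x ≤ fracMax n α (fun y => b y * f y) x + fracMaxComm n α b f x := by
  rw [fracMax]
  simp only [ENNReal.mul_iSup]
  refine iSup₂_le fun c r => iSup₂_le fun hr hx => ?_
  calc ‖b x‖ₑ * (volume (ball c r) ^ (α / n - 1) * ∫⁻ y in ball c r, (‖f y‖₊ : ℝ≥0∞))
      = volume (ball c r) ^ (α / n - 1) * ∫⁻ y in ball c r, ‖b x‖ₑ * ‖f y‖₊ := by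
        rw [lintegral_const_mul' _ _ enorm_ne_top]; ring
    _ ≤ volume (ball c r) ^ (α / n - 1) * ∫⁻ y in ball c r,
          ((‖b y * f y‖₊ : ℝ≥0∞) + (‖b x - b y‖₊ : ℝ≥0∞) * (‖f y‖₊ : ℝ≥0∞)) := by
        gcongr with y
        simp only [← enorm_eq_nnnorm, enorm_mul, ← add_mul]
        gcongr
        simpa using enorm_add_le (b y) (b x - b y)
    _ = _ := by
        rw [lintegral_add_right' _ ((hb.aemeasurable_enorm_sub_mul x hf).restrict), mul_add]
    _ ≤ _ := add_le_add (le_fracMax hr hx) (le_fracMaxComm hr hx)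

lemma fracMax_mul_le (hb : Measurable b) (hf : AEMeasurable f) :
    fracMax n α (fun y => b y * f y) x ≤ ‖b x‖ₑ * fracMax n α f x + fracMaxComm n α b f x := by
  refine iSup₂_le fun c r => iSup₂_le fun hr hx => ?_
  calc volume (ball c r) ^ (α / n - 1) * ∫⁻ y in ball c r, (‖b y * f y‖₊ : ℝ≥0∞)
      ≤ volume (ball c r) ^ (α / n - 1) * ∫⁻ y in ball c r,
          (‖b x‖ₑ * ‖f y‖₊ + (‖b x - b y‖₊ : ℝ≥0∞) * (‖f y‖₊ : ℝ≥0∞)) := by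
        gcongr with y
        simp only [← enorm_eq_nnnorm, enorm_mul, ← add_mul]
        gcongr
        simpa [add_comm] using enorm_sub_le (a := b x) (b := b x - b y)
    _ = ‖b x‖ₑ * (volume (ball c r) ^ (α / n - 1) * ∫⁻ y in ball c r, (‖f y‖₊ : ℝ≥0∞)) +
          volume (ball c r) ^ (α / n - 1) *
            ∫⁻ y in ball c r, (‖b x - b y‖₊ : ℝ≥0∞) * (‖f y‖₊ : ℝ≥0∞) := by
        rw [lintegral_add_right' _ (hb.aemeasurable_enorm_sub_mul x hf).restrict,
          lintegral_const_mul' _ _ enorm_ne_top]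
        ring
    _ ≤ _ := add_le_add (by gcongr; exact le_fracMax hr hx) (le_fracMaxComm hr hx)

lemma volume_ball_rpow_mul_rpow (hn : n ≠ 0) (hr : 0 < r) :
    volume (ball c r) ^ (α / n - 1) * ENNReal.ofReal (r ^ β) =
      volume (ball (0 : EuclideanSpace ℝ (Fin n)) 1) ^ (-(β / n)) *
        volume (ball c r) ^ ((α + β) / n - 1) := by
  have hV := Measure.addHaar_ball_of_pos volume c hr
  rw [finrank_euclideanSpace_fin] at hV
  have hV₀ : volume (ball c r) ≠ 0 := (measure_ball_pos volume c hr).ne'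
  have hV₁ : volume (ball (0 : EuclideanSpace ℝ (Fin n)) 1) ≠ 0 :=
    (measure_ball_pos volume 0 one_pos).ne'
  have hsplit : volume (ball c r) ^ (α / n - 1) =
      volume (ball c r) ^ (-(β / n)) * volume (ball c r) ^ ((α + β) / n - 1) := by
    rw [← ENNReal.rpow_add _ _ hV₀ measure_ball_lt_top.ne]
    ring_nf
  have hradius : ENNReal.ofReal (r ^ n) ^ (-(β / n)) * ENNReal.ofReal (r ^ β) = 1 := by
    have hn' : (n : ℝ) ≠ 0 := Nat.cast_ne_zero.2 hn
    rw [ENNReal.ofReal_rpow_of_pos (by positivity), ← ENNReal.ofReal_mul (by positivity),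
      ← Real.rpow_natCast, ← Real.rpow_mul hr.le, ← Real.rpow_add hr]
    field_simp
    simp
  rw [hsplit, hV, ENNReal.mul_rpow_of_ne_zero (by positivity) hV₁, ← hV]
  calc _ = (ENNReal.ofReal (r ^ n) ^ (-(β / n)) * ENNReal.ofReal (r ^ β)) *
        volume (ball (0 : EuclideanSpace ℝ (Fin n)) 1) ^ (-(β / n)) *
        volume (ball c r) ^ ((α + β) / n - 1) := by ring
    _ = _ := by rw [hradius, one_mul]

lemma fracMaxComm_le (hn : n ≠ 0) (hβ : 0 ≤ β) (hC : 0 ≤ C)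
    (hb : ∀ x y, |b x - b y| ≤ C * ‖x - y‖ ^ β) :
    fracMaxComm n α b f x ≤
      ENNReal.ofReal (C * 2 ^ β) * volume (ball (0 : EuclideanSpace ℝ (Fin n)) 1) ^ (-(β / n)) *
        fracMax n (α + β) f x := by
  refine iSup₂_le fun c r => iSup₂_le fun hr hx => ?_
  have hosc : ∀ y ∈ ball c r,
      (‖b x - b y‖₊ : ℝ≥0∞) ≤ ENNReal.ofReal (C * 2 ^ β) * ENNReal.ofReal (r ^ β) := by
    intro y hy
    have hxy : ‖x - y‖ ≤ 2 * r := by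
      rw [← dist_eq_norm]
      linarith [dist_triangle_right x y c, mem_ball.1 hx, mem_ball.1 hy]
    rw [← enorm_eq_nnnorm, Real.enorm_eq_ofReal_abs, ← ENNReal.ofReal_mul (by positivity)]
    refine ENNReal.ofReal_le_ofReal ((hb x y).trans ?_)
    rw [mul_assoc, ← Real.mul_rpow zero_le_two hr.le]
    gcongr
  calc volume (ball c r) ^ (α / n - 1) *
        ∫⁻ y in ball c r, (‖b x - b y‖₊ : ℝ≥0∞) * (‖f y‖₊ : ℝ≥0∞)
      ≤ volume (ball c r) ^ (α / n - 1) * ∫⁻ y in ball c r,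
          ENNReal.ofReal (C * 2 ^ β) * ENNReal.ofReal (r ^ β) * (‖f y‖₊ : ℝ≥0∞) :=
        mul_le_mul_right
          (setLIntegral_mono' measurableSet_ball fun y hy => mul_le_mul_left (hosc y hy) _) _
    _ = ENNReal.ofReal (C * 2 ^ β) * (volume (ball c r) ^ (α / n - 1) * ENNReal.ofReal (r ^ β)) *
          ∫⁻ y in ball c r, (‖f y‖₊ : ℝ≥0∞) := by
        rw [lintegral_const_mul' _ _ (by finiteness)]
        ring
    _ ≤ _ := by
        rw [volume_ball_rpow_mul_rpow hn hr, ← mul_assoc, mul_assoc _ _ (lintegral _ _)]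
        gcongr
        exact le_fracMax hr hx

end FracMax

theorem stmt9_general (n : ℕ) (hn : 1 ≤ n) (α β : ℝ) (hβ0 : 0 < β)
    (b : EuclideanSpace ℝ (Fin n) → ℝ) (hbpos : ∀ x, 0 ≤ b x) (C : ℝ)
    (hb : ∀ x y, |b x - b y| ≤ C * ‖x - y‖ ^ β) :
    ∃ K : ℝ, 0 ≤ K ∧
      ∀ f : EuclideanSpace ℝ (Fin n) → ℝ, LocallyIntegrable f volume →
        ∀ x : EuclideanSpace ℝ (Fin n),
          fracMax n α f x ≠ ⊤ → fracMax n (α + β) f x ≠ ⊤ →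
          |b x * (fracMax n α f x).toReal -
              (fracMax n α (fun y => b y * f y) x).toReal| ≤
            K * C * (fracMax n (α + β) f x).toReal := by
  have : NeZero n := ⟨by omega⟩
  have hC : 0 ≤ C := nonneg_of_abs_sub_le_mul_norm_rpow hb
  have hbm : Measurable b := (continuous_of_abs_sub_le_mul_norm_rpow hβ0 hb).measurable
  set v := volume (ball (0 : EuclideanSpace ℝ (Fin n)) 1) ^ (-(β / n))
  have hv : v ≠ ⊤ := ENNReal.rpow_ne_top_of_ne_zero (measure_ball_pos volume 0 one_pos).ne'
    measure_ball_lt_top.ne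
  refine ⟨2 ^ β * v.toReal, by positivity, fun f hf x hMα hMαβ => ?_⟩
  have hfm : AEMeasurable f := hf.aestronglyMeasurable.aemeasurable
  have hcomm := fracMaxComm_le (α := α) (f := f) (x := x) (NeZero.ne n) hβ0.le hC hb
  have hbound : ENNReal.ofReal (C * 2 ^ β) * v * fracMax n (α + β) f x ≠ ⊤ := by finiteness
  calc |b x * (fracMax n α f x).toReal - (fracMax n α (fun y => b y * f y) x).toReal|
      = |(‖b x‖ₑ * fracMax n α f x).toReal - (fracMax n α (fun y => b y * f y) x).toReal| := by
        rw [ENNReal.toReal_mul, toReal_enorm, Real.norm_of_nonneg (hbpos x)]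
    _ ≤ (fracMaxComm n α b f x).toReal :=
        ENNReal.abs_toReal_sub_toReal_le (by finiteness) (ne_top_of_le_ne_top hbound hcomm)
          (enorm_mul_fracMax_le hbm hfm) (fracMax_mul_le hbm hfm)
    _ ≤ _ := ENNReal.toReal_mono hbound hcomm
    _ = _ := by
        rw [ENNReal.toReal_mul, ENNReal.toReal_mul, ENNReal.toReal_ofReal (by positivity)]
        ring

/-- if `b ≥ 0` and `b ∈ Λ̇_β` with constant `C`, then
`|[b, M_α] f (x)| ≤ K C · M_{α+β} f (x)` pointwise, with `K = K(n, β)`. -/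
theorem stmt9 (n : ℕ) (hn : 1 ≤ n) (α β : ℝ) (hβ0 : 0 < β) (hβ1 : β < 1)
    (hα0 : 0 < α) (hαn : α < n) (hαβn : α + β < n)
    (b : EuclideanSpace ℝ (Fin n) → ℝ) (hbpos : ∀ x, 0 ≤ b x) (C : ℝ)
    (hb : ∀ x y, |b x - b y| ≤ C * ‖x - y‖ ^ β) :
    ∃ K : ℝ, 0 ≤ K ∧
      ∀ f : EuclideanSpace ℝ (Fin n) → ℝ, LocallyIntegrable f volume →
        ∀ x : EuclideanSpace ℝ (Fin n),
          fracMax n α f x ≠ ⊤ → fracMax n (α + β) f x ≠ ⊤ →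
          |b x * (fracMax n α f x).toReal -
              (fracMax n α (fun y => b y * f y) x).toReal| ≤
            K * C * (fracMax n (α + β) f x).toReal :=
  stmt9_general n hn α β hβ0 b hbpos C hb
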